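/- arXiv:2006.15287 — 4 statements merged into one kernel-verified Lean document; each statement's English description precedes it below -/
import Mathlib

section
/- Let L, s and k be positive integers with L ≥ s+2 and 2s+2 ≤ k ≤ L+s. Then for every integer N ≥ κ'(s), the number of partitions of N lying in I_{L,s,k} is strictly greater than the number of partitions of N lying in D_{L,s}. -/
/-- `D_{L,s}`: nonempty partitions with all parts in `{s+1, ..., L+s}`. -/
def InD (L s : ℕ) {N : ℕ} (p : N.Partition) : Prop :=
  p.parts ≠ 0 ∧ ∀ x ∈ p.parts, s + 1 ≤ x ∧ x ≤ L + s

/-- `I_{L,s,k}`: partitions with smallest part `s`, all parts `≤ L+s`, and no part equal to `k`. -/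
def InI (L s k : ℕ) {N : ℕ} (p : N.Partition) : Prop :=
  s ∈ p.parts ∧ (∀ x ∈ p.parts, s ≤ x ∧ x ≤ L + s) ∧ k ∉ p.parts

/-- `F'(s) = (21s−2)(35s−3)+8s`. -/
def Fs' (s : ℕ) : ℕ := (21 * s - 2) * (35 * s - 3) + 8 * s

/-- `κ'(s) = (12s−1)((s+1)+(s+2)+⋯+(F'(s)−1))+1`. -/
def kappa' (s : ℕ) : ℕ := (12 * s - 1) * (∑ i ∈ Finset.Icc (s + 1) (Fs' s - 1), i) + 1

/-!
We build an injection `θ` from the partitions of `N` in `D_{L,s}` to those in `I_{L,s,k}` by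
trading some parts for a block of parts in `[s, 2s+1]` containing `s`; such a block stays below
`L + s` and avoids `k ≥ 2s+2`.
* If `k` occurs `j > 0` times, all copies of `k` become `2j-1` copies of `s` plus parts in
  `[s+1, 2s+1]`.
* Otherwise, if some part occurs at least `12s` times, `2s` copies of the least such part `v`
  become `2v` copies of `s`.
* Otherwise, since `N ≥ κ'(s)`, pigeonhole gives a part `P ≥ F'(s) ≥ 100 s²`. It becomes
  `13s+1` copies of the `y ∈ [s+1, 2s]` with `y ≡ P (mod s)`, `0` or `13s` copies of `2s+1`
  (to fix the parity) and an even number `t > 4s` of copies of `s`.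

The number of `s`'s is odd in the first case and even in the others. The second and third
cases cannot collide, since `2v = t > 4s` would force `y < v` while `y` occurs at least `12s` times.
Within a case the counts of `s`, `y` and `2s+1` determine the trade, which can then be undone.
Finally no image has exactly two `s`'s, while some partition in `I_{L,s,k}` has.
-/

open Multiset

namespace PartitionExchange

section Exchange

variable {α : Type*} [DecidableEq α]

def exchange (m : Multiset α) (n : ℕ) (v : α) (A : Multiset α) : Multiset α :=
  m - replicate n v + A

theorem count_exchange (m : Multiset α) (n : ℕ) (v : α) (A : Multiset α) (x : α) :
    (exchange m n v A).count x = m.count x - (if v = x then n else 0) + A.count x := by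
  rw [exchange, count_add, count_sub, count_replicate]

theorem count_exchange_of_notMem {m A : Multiset α} {n : ℕ} {v x : α} (hx : x ∉ m) :
    (exchange m n v A).count x = A.count x := by
  rw [count_exchange, count_eq_zero.2 hx, Nat.zero_sub, zero_add]

theorem mem_exchange {m A : Multiset α} {n : ℕ} {v x : α} (hx : x ∈ exchange m n v A) :
    x ∈ m ∨ x ∈ A :=
  (mem_add.1 hx).imp_left (mem_of_le (Multiset.sub_le_self _ _))

theorem exchange_left_inj {m₁ m₂ A : Multiset α} {n : ℕ} {v : α}
    (h₁ : n ≤ m₁.count v) (h₂ : n ≤ m₂.count v) :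
    exchange m₁ n v A = exchange m₂ n v A ↔ m₁ = m₂ := by
  rw [exchange, exchange, add_left_inj,
    tsub_left_inj (le_count_iff_replicate_le.1 h₁) (le_count_iff_replicate_le.1 h₂)]

theorem sum_exchange [AddCommMonoid α] {m A : Multiset α} {n : ℕ} {v : α}
    (h : n ≤ m.count v) (hA : A.sum = n • v) : (exchange m n v A).sum = m.sum := by
  rw [exchange, sum_add, hA, ← sum_replicate, ← sum_add,
    tsub_add_cancel_of_le (le_count_iff_replicate_le.1 h)]

end Exchange

theorem sum_le_mul_sum_of_count_le {m : Multiset ℕ} {S : Finset ℕ} {c : ℕ}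
    (hS : ∀ x ∈ m, x ∈ S) (hc : ∀ x, m.count x ≤ c) : m.sum ≤ c * ∑ i ∈ S, i := by
  rw [Finset.sum_multiset_count_of_subset m S fun x hx => hS x (mem_toFinset.1 hx),
    Finset.mul_sum]
  exact Finset.sum_le_sum fun i _ => Nat.mul_le_mul_right i (hc i)

section Constants

variable {s : ℕ}

theorem hundred_mul_sq_le_Fs' (hs : 0 < s) : 100 * s ^ 2 ≤ Fs' s := by
  obtain ⟨u, rfl⟩ := Nat.exists_eq_add_of_lt hs
  rw [Fs', show 21 * (0 + u + 1) - 2 = 21 * u + 19 by omega,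
    show 35 * (0 + u + 1) - 3 = 35 * u + 32 by omega]
  nlinarith

theorem three_mul_lt_kappa' (hs : 0 < s) : 3 * s < kappa' s := by
  have hF := hundred_mul_sq_le_Fs' hs
  have hF2 : s + 2 ≤ Fs' s := by nlinarith
  have hmem : s + 1 ∈ Finset.Icc (s + 1) (Fs' s - 1) := Finset.mem_Icc.2 ⟨le_rfl, by omega⟩
  have hsum : s + 1 ≤ ∑ i ∈ Finset.Icc (s + 1) (Fs' s - 1), i :=
    Finset.single_le_sum (f := id) (fun i _ => Nat.zero_le i) hmem
  have h12 : 11 * s ≤ 12 * s - 1 := by omega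
  rw [kappa']
  nlinarith

theorem exists_mem_Fs'_le_of_kappa'_le {m : Multiset ℕ} (hlow : ∀ x ∈ m, s < x)
    (hcount : ∀ x, m.count x < 12 * s) (hsum : kappa' s ≤ m.sum) : ∃ P ∈ m, Fs' s ≤ P := by
  by_contra! h
  have := sum_le_mul_sum_of_count_le (S := Finset.Icc (s + 1) (Fs' s - 1)) (c := 12 * s - 1)
    (fun x hx => Finset.mem_Icc.2 ⟨hlow x hx, by have := h x hx; omega⟩)
    (fun x => by have := hcount x; omega)
  rw [kappa'] at hsum
  omega

end Constants

def blocks (s M : ℕ) : Multiset ℕ :=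
  if M ≤ 2 * s + 1 then {M} else (s + 1) ::ₘ blocks s (M - (s + 1))
termination_by M
decreasing_by omega

theorem sum_blocks (s M : ℕ) : (blocks s M).sum = M := by
  induction M using Nat.strong_induction_on with
  | _ M ih =>
    rw [blocks]
    split_ifs with h
    · exact sum_singleton M
    · rw [sum_cons, ih _ (by omega)]
      omega

theorem mem_blocks {s M x : ℕ} (hM : s < M) (hx : x ∈ blocks s M) : s < x ∧ x ≤ 2 * s + 1 := by
  induction M using Nat.strong_induction_on with
  | _ M ih =>
    rw [blocks] at hx
    split_ifs at hx with h
    · rw [mem_singleton.1 hx]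
      exact ⟨hM, h⟩
    · rcases mem_cons.1 hx with rfl | hx
      · omega
      · exact ih _ (by omega) (by omega) hx

section Blocks

variable {s k j P x : ℕ}

def kBlock (s k j : ℕ) : Multiset ℕ :=
  blocks s (j * (k - 2 * s) + s) + replicate (2 * j - 1) s

theorem sum_kBlock (hk : 2 * s ≤ k) (hj : 0 < j) : (kBlock s k j).sum = j • k := by
  obtain ⟨d, rfl⟩ := Nat.exists_eq_add_of_le hk
  obtain ⟨i, rfl⟩ := Nat.exists_eq_add_of_lt hj
  rw [kBlock, sum_add, sum_blocks, sum_replicate, smul_eq_mul, smul_eq_mul,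
    Nat.add_sub_cancel_left, show 2 * (0 + i + 1) - 1 = 2 * i + 1 by omega]
  ring

theorem mem_kBlock (hk : 2 * s < k) (hj : 0 < j) (hx : x ∈ kBlock s k j) :
    x = s ∨ s < x ∧ x ≤ 2 * s + 1 := by
  rcases mem_add.1 hx with hx | hx
  · exact Or.inr (mem_blocks (by nlinarith [Nat.sub_pos_of_lt hk]) hx)
  · exact Or.inl (eq_of_mem_replicate hx)

theorem count_kBlock_self (hk : 2 * s < k) (hj : 0 < j) :
    (kBlock s k j).count s = 2 * j - 1 := by
  have hs : s ∉ blocks s (j * (k - 2 * s) + s) := fun h =>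
    lt_irrefl s (mem_blocks (by nlinarith [Nat.sub_pos_of_lt hk]) h).1
  rw [kBlock, count_add, count_eq_zero.2 hs, count_replicate_self, zero_add]

def lbBase (s P : ℕ) : ℕ := s + 1 + (P - (s + 1)) % s

def lbQuot (s P : ℕ) : ℕ := (P - (s + 1)) / s - 13 * lbBase s P

def lbPad (s P : ℕ) : ℕ := if Even (lbQuot s P) then 0 else 13 * s

def lbMult (s P : ℕ) : ℕ :=
  if Even (lbQuot s P) then lbQuot s P else lbQuot s P - 13 * (2 * s + 1)

def largeBlock (s P : ℕ) : Multiset ℕ :=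
  replicate (13 * s + 1) (lbBase s P) + replicate (lbPad s P) (2 * s + 1) +
    replicate (lbMult s P) s

theorem lbBase_mem (hs : 0 < s) : s < lbBase s P ∧ lbBase s P ≤ 2 * s := by
  have := Nat.mod_lt (P - (s + 1)) hs
  unfold lbBase
  omega

theorem lbPad_eq_zero_or (s P : ℕ) : lbPad s P = 0 ∨ lbPad s P = 13 * s := by
  unfold lbPad
  split_ifs <;> simp

theorem lbQuot_ge (hs : 0 < s) (hP : 100 * s ^ 2 ≤ P) : 56 * s + 14 ≤ lbQuot s P := by
  have hq : 98 * s ≤ (P - (s + 1)) / s := (Nat.le_div_iff_mul_le hs).2 (by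
    have : 98 * s * s + s + 1 ≤ P := by nlinarith
    omega)
  have := (lbBase_mem (P := P) hs).2
  unfold lbQuot
  omega

theorem even_lbMult (hs : 0 < s) (hP : 100 * s ^ 2 ≤ P) : Even (lbMult s P) := by
  have := lbQuot_ge hs hP
  unfold lbMult
  split_ifs with h
  · exact h
  · rw [Nat.not_even_iff_odd] at h
    exact Nat.Odd.sub_odd h ((by decide : Odd 13).mul (odd_two_mul_add_one s))

theorem four_mul_lt_lbMult (hs : 0 < s) (hP : 100 * s ^ 2 ≤ P) : 4 * s < lbMult s P := by
  have := lbQuot_ge hs hP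
  unfold lbMult
  split_ifs <;> omega

theorem sum_largeBlock (hs : 0 < s) (hP : 100 * s ^ 2 ≤ P) : (largeBlock s P).sum = P := by
  have hq := lbQuot_ge hs hP
  have hP_eq : P = (13 * s + 1) * lbBase s P + s * lbQuot s P := by
    have hP1 : s + 1 ≤ P := by nlinarith
    have hdiv : P = s * ((P - (s + 1)) / s) + (P - (s + 1)) % s + (s + 1) := by
      have := Nat.div_add_mod (P - (s + 1)) s
      omega
    unfold lbQuot at hq ⊢
    unfold lbBase at *
    obtain ⟨t, ht⟩ := Nat.exists_eq_add_of_le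
      (show 13 * (s + 1 + (P - (s + 1)) % s) ≤ (P - (s + 1)) / s by omega)
    rw [ht, Nat.add_sub_cancel_left]
    rw [ht] at hdiv
    linear_combination hdiv
  simp only [largeBlock, sum_add, sum_replicate, smul_eq_mul, lbPad, lbMult]
  split_ifs
  · linear_combination hP_eq.symm
  · obtain ⟨t, ht⟩ := Nat.exists_eq_add_of_le (show 13 * (2 * s + 1) ≤ lbQuot s P by omega)
    rw [ht, Nat.add_sub_cancel_left]
    rw [ht] at hP_eq
    linear_combination hP_eq.symm

theorem count_largeBlock (s P x : ℕ) : (largeBlock s P).count x =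
    (if lbBase s P = x then 13 * s + 1 else 0) + (if 2 * s + 1 = x then lbPad s P else 0) +
      (if s = x then lbMult s P else 0) := by
  rw [largeBlock, count_add, count_add, count_replicate, count_replicate, count_replicate]

theorem count_largeBlock_self (hs : 0 < s) (P : ℕ) :
    (largeBlock s P).count s = lbMult s P := by
  have := lbBase_mem (P := P) hs
  rw [count_largeBlock, if_neg (by omega), if_neg (by omega), if_pos rfl, zero_add, zero_add]

theorem mem_largeBlock (hs : 0 < s) (hx : x ∈ largeBlock s P) :
    x = s ∨ s < x ∧ x ≤ 2 * s + 1 := by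
  have := lbBase_mem (P := P) hs
  simp only [largeBlock, mem_add, mem_replicate] at hx
  omega

end Blocks

open Classical in
noncomputable def theta (s k : ℕ) (m : Multiset ℕ) : Multiset ℕ :=
  if 0 < m.count k then exchange m (m.count k) k (kBlock s k (m.count k))
  else if hv : ∃ v, 12 * s ≤ m.count v then
    exchange m (2 * s) (Nat.find hv) (replicate (2 * Nat.find hv) s)
  else if hP : ∃ P ∈ m, 100 * s ^ 2 ≤ P then
    exchange m 1 hP.choose (largeBlock s hP.choose)
  else m -- unreachable once `kappa' s ≤ m.sum`

section Theta

variable {s k : ℕ} {m : Multiset ℕ}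

theorem theta_cases (hs : 0 < s) (hlow : ∀ x ∈ m, s < x) (hsum : kappa' s ≤ m.sum) :
    (0 < m.count k ∧ theta s k m = exchange m (m.count k) k (kBlock s k (m.count k))) ∨
    (m.count k = 0 ∧ ∃ v, 12 * s ≤ m.count v ∧ (∀ u < v, m.count u < 12 * s) ∧
      theta s k m = exchange m (2 * s) v (replicate (2 * v) s)) ∨
    (m.count k = 0 ∧ (∀ u, m.count u < 12 * s) ∧ ∃ P ∈ m, 100 * s ^ 2 ≤ P ∧
      theta s k m = exchange m 1 P (largeBlock s P)) := by
  classical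
  by_cases hk : 0 < m.count k
  · exact Or.inl ⟨hk, by rw [theta, if_pos hk]⟩
  have hk0 : m.count k = 0 := by omega
  by_cases hv : ∃ v, 12 * s ≤ m.count v
  · refine Or.inr (Or.inl ⟨hk0, Nat.find hv, Nat.find_spec hv,
      fun u hu => not_le.1 (Nat.find_min hv hu), ?_⟩)
    rw [theta, if_neg hk, dif_pos hv]
  push Not at hv
  have hP : ∃ P ∈ m, 100 * s ^ 2 ≤ P := by
    obtain ⟨P, hPm, hPF⟩ := exists_mem_Fs'_le_of_kappa'_le hlow hv hsum
    exact ⟨P, hPm, (hundred_mul_sq_le_Fs' hs).trans hPF⟩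
  refine Or.inr (Or.inr ⟨hk0, hv, hP.choose, hP.choose_spec.1, hP.choose_spec.2, ?_⟩)
  rw [theta, if_neg hk, dif_neg (by simpa using hv), dif_pos hP]

theorem exists_theta_eq_exchange (hs : 0 < s) (hk : 2 * s + 1 < k) (hlow : ∀ x ∈ m, s < x)
    (hsum : kappa' s ≤ m.sum) :
    ∃ n v A, theta s k m = exchange m n v A ∧ n ≤ m.count v ∧ A.sum = n • v ∧
      (∀ x ∈ A, x = s ∨ s < x ∧ x ≤ 2 * s + 1) ∧ 0 < A.count s ∧ A.count s ≠ 2 ∧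
      (0 < m.count k → v = k ∧ n = m.count k) := by
  rcases theta_cases hs hlow hsum with ⟨hj, e⟩ | ⟨hk0, v, hv, -, e⟩ | ⟨hk0, -, P, hPm, hP, e⟩
  · have hc := count_kBlock_self (by omega : 2 * s < k) hj
    exact ⟨_, k, _, e, le_rfl, sum_kBlock (by omega) hj,
      fun x hx => mem_kBlock (by omega) hj hx, by omega, by omega, fun _ => ⟨rfl, rfl⟩⟩
  · have hvs : s < v := hlow v (count_pos.1 (by omega))
    refine ⟨2 * s, v, replicate (2 * v) s, e, by omega, ?_,
      fun x hx => Or.inl (eq_of_mem_replicate hx), ?_, ?_, by omega⟩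
    · rw [sum_replicate, smul_eq_mul, smul_eq_mul]
      ring
    all_goals rw [count_replicate_self]; omega
  · have hc := count_largeBlock_self hs P
    have := four_mul_lt_lbMult hs hP
    exact ⟨1, P, largeBlock s P, e, one_le_count_iff_mem.2 hPm,
      by rw [sum_largeBlock hs hP, one_smul], fun x hx => mem_largeBlock hs hx,
      by omega, by omega, by omega⟩

theorem sum_theta (hs : 0 < s) (hk : 2 * s + 1 < k) (hlow : ∀ x ∈ m, s < x)
    (hsum : kappa' s ≤ m.sum) : (theta s k m).sum = m.sum := by
  obtain ⟨n, v, A, e, hn, hA, -⟩ := exists_theta_eq_exchange hs hk hlow hsum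
  rw [e, sum_exchange hn hA]

theorem count_theta_self_pos_ne_two (hs : 0 < s) (hk : 2 * s + 1 < k)
    (hlow : ∀ x ∈ m, s < x) (hsum : kappa' s ≤ m.sum) :
    0 < (theta s k m).count s ∧ (theta s k m).count s ≠ 2 := by
  obtain ⟨n, v, A, e, -, -, -, hpos, hne, -⟩ := exists_theta_eq_exchange hs hk hlow hsum
  rw [e, count_exchange_of_notMem fun h => lt_irrefl s (hlow s h)]
  exact ⟨hpos, hne⟩

theorem bounds_of_mem_theta {L x : ℕ} (hs : 0 < s) (hL : s + 1 ≤ L) (hk : 2 * s + 1 < k)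
    (hlow : ∀ x ∈ m, s < x ∧ x ≤ L + s) (hsum : kappa' s ≤ m.sum) (hx : x ∈ theta s k m) :
    s ≤ x ∧ x ≤ L + s := by
  obtain ⟨n, v, A, e, -, -, hA, -⟩ :=
    exists_theta_eq_exchange hs hk (fun x hx => (hlow x hx).1) hsum
  rw [e] at hx
  rcases mem_exchange hx with hx | hx
  · have := hlow x hx
    omega
  · have := hA x hx
    omega

theorem notMem_theta (hs : 0 < s) (hk : 2 * s + 1 < k) (hlow : ∀ x ∈ m, s < x)
    (hsum : kappa' s ≤ m.sum) : k ∉ theta s k m := by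
  obtain ⟨n, v, A, e, -, -, hA, -, -, hvk⟩ := exists_theta_eq_exchange hs hk hlow hsum
  have hkA : A.count k = 0 := count_eq_zero.2 fun h => by have := hA k h; omega
  rw [e, ← count_pos, count_exchange, hkA]
  by_cases hkm : 0 < m.count k
  · obtain ⟨rfl, rfl⟩ := hvk hkm
    rw [if_pos rfl]
    omega
  · omega

end Theta

section Injectivity

variable {s k n v P₁ P₂ : ℕ} {m₁ m₂ : Multiset ℕ}

theorem eq_of_exchange_kBlock_eq (hk : 2 * s < k) (hs₁ : s ∉ m₁) (hs₂ : s ∉ m₂)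
    (hj₁ : 0 < m₁.count k) (hj₂ : 0 < m₂.count k)
    (h : exchange m₁ (m₁.count k) k (kBlock s k (m₁.count k)) =
      exchange m₂ (m₂.count k) k (kBlock s k (m₂.count k))) : m₁ = m₂ := by
  have hc := congrArg (count s) h
  rw [count_exchange_of_notMem hs₁, count_exchange_of_notMem hs₂, count_kBlock_self hk hj₁,
    count_kBlock_self hk hj₂] at hc
  have hj : m₁.count k = m₂.count k := by omega
  rw [hj] at h
  exact (exchange_left_inj hj.ge le_rfl).1 h

theorem eq_of_exchange_replicate_eq {v₁ v₂ : ℕ} (hs₁ : s ∉ m₁) (hs₂ : s ∉ m₂)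
    (hv₁ : n ≤ m₁.count v₁) (hv₂ : n ≤ m₂.count v₂)
    (h : exchange m₁ n v₁ (replicate (2 * v₁) s) = exchange m₂ n v₂ (replicate (2 * v₂) s)) :
    m₁ = m₂ := by
  have hc := congrArg (count s) h
  rw [count_exchange_of_notMem hs₁, count_exchange_of_notMem hs₂, count_replicate_self,
    count_replicate_self] at hc
  obtain rfl : v₁ = v₂ := by omega
  exact (exchange_left_inj hv₁ hv₂).1 h

theorem eq_of_exchange_largeBlock_eq (hs : 0 < s) (hs₁ : s ∉ m₁) (hs₂ : s ∉ m₂)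
    (hc₁ : ∀ u, m₁.count u < 12 * s) (hc₂ : ∀ u, m₂.count u < 12 * s)
    (hPm₁ : P₁ ∈ m₁) (hPm₂ : P₂ ∈ m₂) (hP₁ : 100 * s ^ 2 ≤ P₁) (hP₂ : 100 * s ^ 2 ≤ P₂)
    (h : exchange m₁ 1 P₁ (largeBlock s P₁) = exchange m₂ 1 P₂ (largeBlock s P₂)) :
    m₁ = m₂ := by
  have hcount x := congrArg (count x) h
  simp only [count_exchange, count_largeBlock] at hcount
  have hy₁ := lbBase_mem (P := P₁) hs
  have hy₂ := lbBase_mem (P := P₂) hs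
  have hy : lbBase s P₁ = lbBase s P₂ := by
    by_contra hne
    have hb := hcount (lbBase s P₁)
    have := hc₂ (lbBase s P₁)
    split_ifs at hb <;> omega
  have hpad : lbPad s P₁ = lbPad s P₂ := by
    have hb := hcount (2 * s + 1)
    have := hc₁ (2 * s + 1)
    have := hc₂ (2 * s + 1)
    have := lbPad_eq_zero_or s P₁
    have := lbPad_eq_zero_or s P₂
    split_ifs at hb <;> omega
  have hmult : lbMult s P₁ = lbMult s P₂ := by
    have hb := hcount s
    rw [count_eq_zero.2 hs₁, count_eq_zero.2 hs₂] at hb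
    split_ifs at hb <;> omega
  obtain rfl : P₁ = P₂ := by
    rw [← sum_largeBlock hs hP₁, ← sum_largeBlock hs hP₂, largeBlock, largeBlock, hy, hpad,
      hmult]
  exact (exchange_left_inj (one_le_count_iff_mem.2 hPm₁) (one_le_count_iff_mem.2 hPm₂)).1 h

theorem exchange_kBlock_ne_exchange_replicate (hk : 2 * s < k) (hs₁ : s ∉ m₁) (hs₂ : s ∉ m₂)
    (hj : 0 < m₁.count k) :
    exchange m₁ (m₁.count k) k (kBlock s k (m₁.count k)) ≠
      exchange m₂ n v (replicate (2 * v) s) := by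
  intro h
  have hc := congrArg (count s) h
  rw [count_exchange_of_notMem hs₁, count_exchange_of_notMem hs₂, count_kBlock_self hk hj,
    count_replicate_self] at hc
  omega

theorem exchange_kBlock_ne_exchange_largeBlock (hs : 0 < s) (hk : 2 * s < k) (hs₁ : s ∉ m₁)
    (hs₂ : s ∉ m₂) (hj : 0 < m₁.count k) (hP : 100 * s ^ 2 ≤ P₂) :
    exchange m₁ (m₁.count k) k (kBlock s k (m₁.count k)) ≠
      exchange m₂ 1 P₂ (largeBlock s P₂) := by
  intro h
  have hc := congrArg (count s) h
  rw [count_exchange_of_notMem hs₁, count_exchange_of_notMem hs₂, count_kBlock_self hk hj,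
    count_largeBlock_self hs] at hc
  obtain ⟨r, hr⟩ := even_lbMult hs hP
  omega

theorem exchange_replicate_ne_exchange_largeBlock (hs : 0 < s) (hs₁ : s ∉ m₁) (hs₂ : s ∉ m₂)
    (hmin : ∀ u < v, m₁.count u < 12 * s) (hP : 100 * s ^ 2 ≤ P₂) :
    exchange m₁ n v (replicate (2 * v) s) ≠ exchange m₂ 1 P₂ (largeBlock s P₂) := by
  intro h
  have hcount x := congrArg (count x) h
  simp only [count_exchange, count_replicate, count_largeBlock] at hcount
  have hy := lbBase_mem (P := P₂) hs
  have := four_mul_lt_lbMult hs hP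
  have hv : 2 * v = lbMult s P₂ := by
    have hb := hcount s
    rw [count_eq_zero.2 hs₁, count_eq_zero.2 hs₂] at hb
    split_ifs at hb <;> omega
  have hb := hcount (lbBase s P₂)
  have := hmin (lbBase s P₂) (by omega)
  split_ifs at hb <;> omega

theorem eq_of_theta_eq (hs : 0 < s) (hk : 2 * s + 1 < k) (hlow₁ : ∀ x ∈ m₁, s < x)
    (hlow₂ : ∀ x ∈ m₂, s < x) (hsum₁ : kappa' s ≤ m₁.sum) (hsum₂ : kappa' s ≤ m₂.sum)
    (h : theta s k m₁ = theta s k m₂) : m₁ = m₂ := by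
  have hs₁ : s ∉ m₁ := fun h => lt_irrefl s (hlow₁ s h)
  have hs₂ : s ∉ m₂ := fun h => lt_irrefl s (hlow₂ s h)
  have hk' : 2 * s < k := by omega
  rcases theta_cases (k := k) hs hlow₁ hsum₁ with
    ⟨hj₁, e₁⟩ | ⟨-, v₁, hv₁, hmin₁, e₁⟩ | ⟨-, hc₁, P₁, hPm₁, hP₁, e₁⟩ <;>
  rcases theta_cases (k := k) hs hlow₂ hsum₂ with
    ⟨hj₂, e₂⟩ | ⟨-, v₂, hv₂, hmin₂, e₂⟩ | ⟨-, hc₂, P₂, hPm₂, hP₂, e₂⟩ <;>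
  rw [e₁, e₂] at h
  · exact eq_of_exchange_kBlock_eq hk' hs₁ hs₂ hj₁ hj₂ h
  · exact absurd h (exchange_kBlock_ne_exchange_replicate hk' hs₁ hs₂ hj₁)
  · exact absurd h (exchange_kBlock_ne_exchange_largeBlock hs hk' hs₁ hs₂ hj₁ hP₂)
  · exact absurd h.symm (exchange_kBlock_ne_exchange_replicate hk' hs₂ hs₁ hj₂)
  · exact eq_of_exchange_replicate_eq hs₁ hs₂ (by omega) (by omega) h
  · exact absurd h (exchange_replicate_ne_exchange_largeBlock hs hs₁ hs₂ hmin₁ hP₂)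
  · exact absurd h.symm (exchange_kBlock_ne_exchange_largeBlock hs hk' hs₂ hs₁ hj₂ hP₁)
  · exact absurd h.symm (exchange_replicate_ne_exchange_largeBlock hs hs₂ hs₁ hmin₂ hP₁)
  · exact eq_of_exchange_largeBlock_eq hs hs₁ hs₂ hc₁ hc₂ hPm₁ hPm₂ hP₁ hP₂ h

end Injectivity

theorem card_lt_card_of_parts_injOn {N : ℕ} {P Q : N.Partition → Prop}
    (f : Multiset ℕ → Multiset ℕ) (hmaps : ∀ p, P p → ∃ q, Q q ∧ q.parts = f p.parts)
    (hinj : ∀ p₁ p₂, P p₁ → P p₂ → f p₁.parts = f p₂.parts → p₁.parts = p₂.parts)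
    (hnew : ∃ q, Q q ∧ ∀ p, P p → f p.parts ≠ q.parts) :
    Nat.card {p // P p} < Nat.card {p // Q p} := by
  classical
  choose g hgQ hg using hmaps
  obtain ⟨q, hq, hqnew⟩ := hnew
  rw [Nat.card_eq_fintype_card, Nat.card_eq_fintype_card]
  refine Fintype.card_lt_of_injective_of_notMem (fun p => ⟨g p p.2, hgQ p p.2⟩)
    (fun p₁ p₂ h => Subtype.ext (Nat.Partition.ext (hinj _ _ p₁.2 p₂.2 ?_))) (b := ⟨q, hq⟩) ?_
  · rw [← hg, ← hg]
    exact congrArg (fun r => r.1.parts) h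
  · rintro ⟨p, hp⟩
    exact hqnew p p.2 (by rw [← hg]; exact congrArg (fun r => r.1.parts) hp)

theorem exists_inI_count_self_eq_two {L s k N : ℕ} (hs : 0 < s) (hL : s + 1 ≤ L)
    (hk : 2 * s + 1 < k) (hN : 3 * s < N) :
    ∃ q : N.Partition, InI L s k q ∧ q.parts.count s = 2 := by
  have hblocks : ∀ x ∈ blocks s (N - 2 * s), s < x ∧ x ≤ 2 * s + 1 := fun x =>
    mem_blocks (by omega)
  have hmem : ∀ x ∈ blocks s (N - 2 * s) + replicate 2 s, s ≤ x ∧ x ≤ 2 * s + 1 := by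
    intro x hx
    rcases mem_add.1 hx with hx | hx
    · have := hblocks x hx
      omega
    · rw [eq_of_mem_replicate hx]
      omega
  refine ⟨⟨blocks s (N - 2 * s) + replicate 2 s, fun hx => hs.trans_le (hmem _ hx).1, ?_⟩,
    ⟨mem_add.2 (Or.inr (mem_replicate.2 ⟨two_ne_zero, rfl⟩)), fun x hx => ?_, fun hx => ?_⟩, ?_⟩
  · rw [sum_add, sum_blocks, sum_replicate, smul_eq_mul]
    omega
  · have := hmem x hx
    omega
  · have := hmem k hx
    omega
  · rw [count_add, count_eq_zero.2 fun h => lt_irrefl s (hblocks s h).1, count_replicate_self]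

theorem exists_inI_parts_eq_theta {L s k N : ℕ} (hs : 0 < s) (hL : s + 1 ≤ L)
    (hk : 2 * s + 1 < k) (hN : kappa' s ≤ N) {p : N.Partition} (hp : InD L s p) :
    ∃ q : N.Partition, InI L s k q ∧ q.parts = theta s k p.parts := by
  have hlow : ∀ x ∈ p.parts, s < x := fun x hx => (hp.2 x hx).1
  have hsum : kappa' s ≤ p.parts.sum := hN.trans p.parts_sum.ge
  have hbound x := bounds_of_mem_theta (x := x) hs hL hk hp.2 hsum
  exact ⟨⟨theta s k p.parts, fun hx => hs.trans_le (hbound _ hx).1,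
      by rw [sum_theta hs hk hlow hsum, p.parts_sum]⟩,
    ⟨count_pos.1 (count_theta_self_pos_ne_two hs hk hlow hsum).1, hbound,
      notMem_theta hs hk hlow hsum⟩, rfl⟩

end PartitionExchange

open PartitionExchange in
theorem stmt_4_general (L s k : ℕ) (hs : 0 < s) (hL : s + 2 ≤ L)
    (hk1 : 2 * s + 2 ≤ k)
    (N : ℕ) (hN : kappa' s ≤ N) :
    Nat.card {p : N.Partition // InI L s k p} > Nat.card {p : N.Partition // InD L s p} := by
  have hk : 2 * s + 1 < k := hk1
  have hlow {p : N.Partition} (hp : InD L s p) : ∀ x ∈ p.parts, s < x := fun x hx => (hp.2 x hx).1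
  have hsum (p : N.Partition) : kappa' s ≤ p.parts.sum := hN.trans p.parts_sum.ge
  obtain ⟨q, hq, hq2⟩ := exists_inI_count_self_eq_two (L := L) hs (by omega) hk
    ((three_mul_lt_kappa' hs).trans_le hN)
  refine card_lt_card_of_parts_injOn (theta s k)
    (fun p hp => exists_inI_parts_eq_theta hs (by omega) hk hN hp)
    (fun p₁ p₂ hp₁ hp₂ => eq_of_theta_eq hs hk (hlow hp₁) (hlow hp₂) (hsum p₁) (hsum p₂))
    ⟨q, hq, fun p hp h => ?_⟩
  exact (count_theta_self_pos_ne_two hs hk (hlow hp) (hsum p)).2 (by rw [h, hq2])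

theorem stmt_4 (L s k : ℕ) (hs : 0 < s) (hL : s + 2 ≤ L)
    (hk1 : 2 * s + 2 ≤ k) (hk2 : k ≤ L + s)
    (N : ℕ) (hN : kappa' s ≤ N) :
    Nat.card {p : N.Partition // InI L s k p} > Nat.card {p : N.Partition // InD L s p} :=
  stmt_4_general L s k hs hL hk1 N hN
end

section
/- Let L, s and k be positive integers with L ≥ 3 and k ≥ s+1. Then every coefficient of the formal power series H_{L,s,k+s}(q) − H_{L,s,k}(q) is nonnegative. -/
open PowerSeries in
/-- The formal power series
`H_{L,s,k}(q) = q^s(1−q^k)/∏_{j=0}^{L}(1−q^{s+j}) − (1/∏_{j=1}^{L}(1−q^{s+j}) − 1)`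
over `ℤ`.  Each factor `1 − q^m` with `m ≥ 1` has constant coefficient `1`, so its
inverse is given by `PowerSeries.invOfUnit _ 1`. -/
noncomputable def Hser (L s k : ℕ) : PowerSeries ℤ :=
  (X : PowerSeries ℤ) ^ s * (1 - (X : PowerSeries ℤ) ^ k) *
      invOfUnit (∏ j ∈ Finset.range (L + 1), (1 - (X : PowerSeries ℤ) ^ (s + j))) 1
    - (invOfUnit (∏ j ∈ Finset.range L, (1 - (X : PowerSeries ℤ) ^ (s + 1 + j))) 1 - 1)

/-!
The `k`-dependence of `H_{L,s,k}` sits in the single term `q^s(1 - q^k)/∏_{j=0}^{L}(1-q^{s+j})`,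
so `H_{L,s,k+s} - H_{L,s,k} = q^{s+k}(1 - q^s)/∏_{j=0}^{L}(1-q^{s+j}) = q^{s+k}/∏_{j=1}^{L}(1-q^{s+j})`.
Each `1/(1 - q^m)` is the geometric series `∑ q^{mn}`, so this is a product of series with
nonnegative coefficients.
-/

open PowerSeries

def nonnegCoeffs : Subsemiring ℤ⟦X⟧ where
  carrier := {f | ∀ n, 0 ≤ coeff n f}
  zero_mem' _ := by simp
  one_mem' n := by rw [coeff_one]; split_ifs <;> norm_num
  add_mem' hf hg n := by rw [map_add]; exact add_nonneg (hf n) (hg n)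
  mul_mem' hf hg n := by
    rw [coeff_mul]
    exact Finset.sum_nonneg fun p _ => mul_nonneg (hf p.1) (hg p.2)

theorem X_mem_nonnegCoeffs : (X : ℤ⟦X⟧) ∈ nonnegCoeffs := fun n => by
  rw [coeff_X]; split_ifs <;> norm_num

theorem mk_one_mem_nonnegCoeffs : (mk 1 : ℤ⟦X⟧) ∈ nonnegCoeffs := fun n => by simp

theorem expand_mem_nonnegCoeffs (p : ℕ) (hp : p ≠ 0) {f : ℤ⟦X⟧} (hf : f ∈ nonnegCoeffs) :
    expand p hp f ∈ nonnegCoeffs := fun n => by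
  rw [coeff_expand]; split_ifs
  exacts [hf _, le_rfl]

section invOfUnit

variable {R : Type*} [CommRing R]

theorem invOfUnit_eq_of_mul_eq_one {f g : R⟦X⟧} {u : Rˣ} (hf : constantCoeff f = u)
    (hfg : f * g = 1) : invOfUnit f u = g := by
  calc invOfUnit f u = invOfUnit f u * f * g := by rw [mul_assoc, hfg, mul_one]
    _ = g := by rw [invOfUnit_mul f u hf, one_mul]

theorem invOfUnit_one_sub_X_pow (m : ℕ) (hm : m ≠ 0) :
    invOfUnit (1 - X ^ m : R⟦X⟧) 1 = expand m hm (mk 1) := by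
  apply invOfUnit_eq_of_mul_eq_one
  · simp [hm]
  · rw [← expand_X m hm, ← map_one (expand m hm), ← map_sub, ← map_mul, mul_comm,
      mk_one_mul_one_sub_eq_one, map_one]

theorem invOfUnit_prod {ι : Type*} (t : Finset ι) (f : ι → R⟦X⟧)
    (hf : ∀ i ∈ t, constantCoeff (f i) = 1) :
    invOfUnit (∏ i ∈ t, f i) 1 = ∏ i ∈ t, invOfUnit (f i) 1 := by
  apply invOfUnit_eq_of_mul_eq_one
  · rw [map_prod, Units.val_one]; exact Finset.prod_eq_one hf
  · rw [← Finset.prod_mul_distrib]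
    exact Finset.prod_eq_one fun i hi => mul_invOfUnit _ _ (hf i hi)

theorem mul_invOfUnit_mul {a b : R⟦X⟧} (ha : constantCoeff a = 1) (hb : constantCoeff b = 1) :
    a * invOfUnit (a * b) 1 = invOfUnit b 1 := by
  symm
  apply invOfUnit_eq_of_mul_eq_one (by simpa using hb)
  calc b * (a * invOfUnit (a * b) 1) = a * b * invOfUnit (a * b) 1 := by ring
    _ = 1 := mul_invOfUnit _ _ (by simp [ha, hb])

end invOfUnit

theorem invOfUnit_prod_one_sub_X_pow_mem_nonnegCoeffs {ι : Type*} (t : Finset ι) (m : ι → ℕ)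
    (hm : ∀ i ∈ t, m i ≠ 0) : invOfUnit (∏ i ∈ t, (1 - X ^ m i)) 1 ∈ nonnegCoeffs := by
  rw [invOfUnit_prod _ _ fun i hi => by simp [hm i hi]]
  refine prod_mem fun i hi => ?_
  rw [invOfUnit_one_sub_X_pow _ (hm i hi)]
  exact expand_mem_nonnegCoeffs _ _ mk_one_mem_nonnegCoeffs

theorem Hser_add_sub_Hser (L s k : ℕ) (hs : 0 < s) :
    Hser L s (k + s) - Hser L s k =
      X ^ (s + k) * invOfUnit (∏ j ∈ Finset.range L, (1 - X ^ (s + 1 + j))) 1 := by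
  have hsplit : ∏ j ∈ Finset.range (L + 1), (1 - X ^ (s + j) : ℤ⟦X⟧) =
      (1 - X ^ s) * ∏ j ∈ Finset.range L, (1 - X ^ (s + 1 + j)) := by
    rw [Finset.prod_range_succ', mul_comm, add_zero]
    simp only [add_assoc, add_comm 1]
  have hB : constantCoeff (∏ j ∈ Finset.range L, (1 - X ^ (s + 1 + j) : ℤ⟦X⟧)) = 1 := by
    simp [map_prod]
  rw [← mul_invOfUnit_mul (a := 1 - X ^ s) (by simp [hs.ne']) hB, ← hsplit]
  simp only [Hser]
  ring

theorem stmt_9_general (L s k : ℕ) (hs : 0 < s) :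
    ∀ N : ℕ, 0 ≤ PowerSeries.coeff N (Hser L s (k + s) - Hser L s k) := by
  rw [Hser_add_sub_Hser L s k hs]
  exact mul_mem (pow_mem X_mem_nonnegCoeffs _)
    (invOfUnit_prod_one_sub_X_pow_mem_nonnegCoeffs _ _ fun j _ => by omega)

theorem stmt_9 (L s k : ℕ) (hs : 0 < s) (hL : 3 ≤ L) (hk : s + 1 ≤ k) :
    ∀ N : ℕ, 0 ≤ PowerSeries.coeff N (Hser L s (k + s) - Hser L s k) :=
  stmt_9_general L s k hs
end

section
/- Let L be an integer with L ≥ 11. Then for every integer N ≥ 4, the number of partitions of N lying in C*_{L,2} is at least the number of partitions of N lying in D_{L,2}; moreover, for every integer N ≥ 14 this inequality is strict. -/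
/-- `D_{L,2}`: nonempty partitions with all parts in `{3, ..., L+2}`. -/
def InD2 (L : ℕ) {N : ℕ} (p : N.Partition) : Prop :=
  p.parts ≠ 0 ∧ ∀ x ∈ p.parts, 3 ≤ x ∧ x ≤ L + 2

/-- `C*_{L,2}`: partitions with smallest part `2`, all parts `≤ L+2`, and no part equal to `L`. -/
def InCStar2 (L : ℕ) {N : ℕ} (p : N.Partition) : Prop :=
  2 ∈ p.parts ∧ (∀ x ∈ p.parts, 2 ≤ x ∧ x ≤ L + 2) ∧ L ∉ p.parts

/-!
A partition in `D_{L,2}` is `3^a L^b ψ`, where every part of `ψ` lies in `{4, …, L+2} \ {L}` and is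
therefore also admissible in `C*_{L,2}`; it is sent injectively to a partition `2^c 3^d ψ'` of the
same number.

If `2 ≤ a` or `b ≠ 0`, the block `3^a L^b` of weight `T = 3a + Lb` becomes `2^c 3^d` with
`d = 2b + (T mod 2)`; then `c ≥ 1` because `L ≥ 11`, and `b = ⌊d/2⌋`, `a = (T - Lb)/3` are read
back. The codes arising this way are exactly the `(c, d)` with `L⌊d/2⌋ ≤ 2c + 3d ≡ L⌊d/2⌋ (mod 3)`.

Otherwise `a ≤ 1`, `b = 0` and `ψ ≠ 0`. The smallest part `m` of `ψ`, together with the `3` when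
`a = 1`, is recoded with `d ∈ {2, 3}` (if `a = 0`) or `d ∈ {4, 5}` (if `a = 1`), which the first
case never produces since `m ≤ L + 2`. When `m` is too small to leave a two, a table of exceptional
codes with `d ≤ 1` and `3 ∤ c` is used instead; some of them also insert a part `4`, `5` or `7`, and
since `m` was the smallest part, membership tests tell them apart.

For `N ≥ 14` the partition `2^2 3^2 ψ` with all parts of `ψ` in `[4, 7]` is missed: it could only
come from `10 ψ`, whose smallest part is at most `7`, so that its code has at most one `3`.
-/

open Multiset

def twosThrees (c d : ℕ) (t : Multiset ℕ) : Multiset ℕ :=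
  replicate c 2 + replicate d 3 + t

section twosThrees

variable {c d : ℕ} {t : Multiset ℕ}

lemma sum_twosThrees : (twosThrees c d t).sum = 2 * c + 3 * d + t.sum := by
  simp [twosThrees, mul_comm]

lemma mem_twosThrees {x : ℕ} :
    x ∈ twosThrees c d t ↔ (x = 2 ∧ c ≠ 0) ∨ (x = 3 ∧ d ≠ 0) ∨ x ∈ t := by
  simp only [twosThrees, mem_add, mem_replicate]
  tauto

lemma count_two_twosThrees (ht : ∀ x ∈ t, 4 ≤ x) : (twosThrees c d t).count 2 = c := by
  have : 2 ∉ t := fun h => by simpa using ht 2 h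
  simp [twosThrees, count_replicate, count_eq_zero.mpr this]

lemma count_three_twosThrees (ht : ∀ x ∈ t, 4 ≤ x) : (twosThrees c d t).count 3 = d := by
  have : 3 ∉ t := fun h => by simpa using ht 3 h
  simp [twosThrees, count_replicate, count_eq_zero.mpr this]

lemma filter_twosThrees (ht : ∀ x ∈ t, 4 ≤ x) : (twosThrees c d t).filter (4 ≤ ·) = t := by
  simp [twosThrees, filter_add, filter_eq_self.mpr ht, filter_eq_nil, mem_replicate]

end twosThrees

def CStarParts (L : ℕ) (μ : Multiset ℕ) : Prop :=
  2 ∈ μ ∧ (∀ x ∈ μ, 2 ≤ x ∧ x ≤ L + 2) ∧ L ∉ μ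

def IsSharedPart (L x : ℕ) : Prop := 4 ≤ x ∧ x ≤ L + 2 ∧ x ≠ L

lemma twosThrees_cstarParts {L c d : ℕ} {t : Multiset ℕ} (hL : 4 ≤ L) (hc : c ≠ 0)
    (ht : ∀ x ∈ t, IsSharedPart L x) : CStarParts L (twosThrees c d t) := by
  refine ⟨mem_twosThrees.2 (Or.inl ⟨rfl, hc⟩), fun x hx => ?_, fun hx => ?_⟩
  · rcases mem_twosThrees.1 hx with ⟨rfl, -⟩ | ⟨rfl, -⟩ | hx
    · omega
    · omega
    · exact ⟨by have := (ht x hx).1; omega, (ht x hx).2.1⟩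
  · rcases mem_twosThrees.1 hx with ⟨h, -⟩ | ⟨h, -⟩ | hx
    · omega
    · omega
    · exact (ht L hx).2.2 rfl

def IsHeadCode (n : ℕ) (f : Multiset ℕ → Multiset ℕ) : Prop :=
  ∃ c d e, c ≠ 0 ∧ 2 * c + 3 * d + e.sum = n ∧ (∀ x ∈ e, 4 ≤ x ∧ x ≤ 7) ∧
    ∀ ψ, f ψ = twosThrees c d (e + ψ)

namespace IsHeadCode

variable {n : ℕ} {f : Multiset ℕ → Multiset ℕ}

lemma sum_eq (hf : IsHeadCode n f) (ψ : Multiset ℕ) : (f ψ).sum = n + ψ.sum := by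
  obtain ⟨c, d, e, -, hn, -, hf⟩ := hf
  rw [hf, sum_twosThrees, sum_add]
  omega

lemma cstarParts {L : ℕ} (hL : 8 ≤ L) (hf : IsHeadCode n f) {ψ : Multiset ℕ}
    (hψ : ∀ x ∈ ψ, IsSharedPart L x) : CStarParts L (f ψ) := by
  obtain ⟨c, d, e, hc, -, he, hf⟩ := hf
  rw [hf]
  refine twosThrees_cstarParts (by omega) hc fun x hx => ?_
  rcases mem_add.1 hx with hx | hx
  · have := he x hx
    exact ⟨this.1, by omega, by omega⟩
  · exact hψ x hx

end IsHeadCode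

lemma isHeadCode_twosThrees {n c d : ℕ} (hc : c ≠ 0) (hn : 2 * c + 3 * d = n) :
    IsHeadCode n (twosThrees c d) :=
  ⟨c, d, 0, hc, by simpa using hn, by simp, by simp⟩

lemma isHeadCode_twosThrees_cons {n c d e : ℕ} (hc : c ≠ 0) (hn : 2 * c + 3 * d + e = n)
    (he : 4 ≤ e ∧ e ≤ 7) : IsHeadCode n (fun ψ => twosThrees c d (e ::ₘ ψ)) :=
  ⟨c, d, {e}, hc, by simpa using hn, by simpa using he, by simp⟩

def mainThrees (L a b : ℕ) : ℕ := 2 * b + (3 * a + L * b) % 2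

def mainTwos (L a b : ℕ) : ℕ := (3 * a + L * b - 3 * mainThrees L a b) / 2

section main

variable {L a b : ℕ}

lemma mainThrees_div_two : mainThrees L a b / 2 = b := by
  unfold mainThrees; omega

lemma mainTwos_spec (hL : 11 ≤ L) (hab : 2 ≤ a ∨ b ≠ 0) :
    mainTwos L a b ≠ 0 ∧ 2 * mainTwos L a b + 3 * mainThrees L a b = 3 * a + L * b := by
  have : 11 * b ≤ L * b := Nat.mul_le_mul_right b hL
  unfold mainTwos mainThrees
  omega

lemma isHeadCode_main (hL : 11 ≤ L) (hab : 2 ≤ a ∨ b ≠ 0) :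
    IsHeadCode (3 * a + L * b) (twosThrees (mainTwos L a b) (mainThrees L a b)) :=
  isHeadCode_twosThrees (mainTwos_spec hL hab).1 (mainTwos_spec hL hab).2

end main

def encodeMin : ℕ → Multiset ℕ → Multiset ℕ
  | 4 => twosThrees 2 0
  | 5 => twosThrees 1 1
  | 6 => fun ψ => twosThrees 1 0 (4 ::ₘ ψ)
  | 7 => twosThrees 2 1
  | 9 => fun ψ => twosThrees 1 1 (4 ::ₘ ψ)
  | m => twosThrees ((m - 3 * (2 + m % 2)) / 2) (2 + m % 2)

def encodeThreeMin : ℕ → Multiset ℕ → Multiset ℕ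
  | 4 => fun ψ => twosThrees 1 0 (5 ::ₘ ψ)
  | 5 => twosThrees 4 0
  | 6 => fun ψ => twosThrees 1 0 (7 ::ₘ ψ)
  | 7 => twosThrees 5 0
  | 8 => twosThrees 4 1
  | 9 => fun ψ => twosThrees 4 0 (4 ::ₘ ψ)
  | 10 => twosThrees 5 1
  | 12 => fun ψ => twosThrees 4 1 (4 ::ₘ ψ)
  | w => twosThrees ((w + 3 - 3 * (4 + (w + 1) % 2)) / 2) (4 + (w + 1) % 2)

lemma isHeadCode_encodeMin {m : ℕ} (hm : 4 ≤ m) : IsHeadCode m (encodeMin m) := by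
  unfold encodeMin
  split
  all_goals first
    | exact isHeadCode_twosThrees (Nat.succ_ne_zero _) rfl
    | exact isHeadCode_twosThrees_cons (Nat.succ_ne_zero _) rfl (by norm_num)
    | simp only [imp_false] at *; exact isHeadCode_twosThrees (by omega) (by omega)

lemma isHeadCode_encodeThreeMin {w : ℕ} (hw : 4 ≤ w) : IsHeadCode (w + 3) (encodeThreeMin w) := by
  unfold encodeThreeMin
  split
  all_goals first
    | exact isHeadCode_twosThrees (Nat.succ_ne_zero _) rfl
    | exact isHeadCode_twosThrees_cons (Nat.succ_ne_zero _) rfl (by norm_num)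
    | simp only [imp_false] at *; exact isHeadCode_twosThrees (by omega) (by omega)

def decodeSmall : ℕ → ℕ → Multiset ℕ → Multiset ℕ
  | 2, 0, ψ => 4 ::ₘ ψ
  | 1, 1, ψ => if 4 ∈ ψ then 9 ::ₘ ψ.erase 4 else 5 ::ₘ ψ
  | 2, 1, ψ => 7 ::ₘ ψ
  | 1, 0, ψ =>
    if 5 ∈ ψ then 3 ::ₘ 4 ::ₘ ψ.erase 5
    else if 4 ∈ ψ then 6 ::ₘ ψ.erase 4 else 3 ::ₘ 6 ::ₘ ψ.erase 7
  | 4, 0, ψ => if 4 ∈ ψ then 3 ::ₘ 9 ::ₘ ψ.erase 4 else 3 ::ₘ 5 ::ₘ ψ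
  | 5, 0, ψ => 3 ::ₘ 7 ::ₘ ψ
  | 4, 1, ψ => if 4 ∈ ψ then 3 ::ₘ 12 ::ₘ ψ.erase 4 else 3 ::ₘ 8 ::ₘ ψ
  | 5, 1, ψ => 3 ::ₘ 10 ::ₘ ψ
  | _, _, ψ => ψ

def decodeCounts (L c d : ℕ) (ψ : Multiset ℕ) : Multiset ℕ :=
  if L * (d / 2) ≤ 2 * c + 3 * d ∧ 3 ∣ 2 * c + 3 * d - L * (d / 2) then
    replicate ((2 * c + 3 * d - L * (d / 2)) / 3) 3 + replicate (d / 2) L + ψ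
  else if d = 2 ∨ d = 3 then (2 * c + 3 * d) ::ₘ ψ
  else if d = 4 ∨ d = 5 then 3 ::ₘ (2 * c + 3 * d - 3) ::ₘ ψ
  else decodeSmall c d ψ

def decode (L : ℕ) (μ : Multiset ℕ) : Multiset ℕ :=
  decodeCounts L (μ.count 2) (μ.count 3) (μ.filter (4 ≤ ·))

lemma decode_twosThrees {L c d : ℕ} {t : Multiset ℕ} (ht : ∀ x ∈ t, 4 ≤ x) :
    decode L (twosThrees c d t) = decodeCounts L c d t := by
  rw [decode, count_two_twosThrees ht, count_three_twosThrees ht, filter_twosThrees ht]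

lemma decodeCounts_main {L a b : ℕ} (hL : 11 ≤ L) (hab : 2 ≤ a ∨ b ≠ 0)
    (ψ : Multiset ℕ) :
    decodeCounts L (mainTwos L a b) (mainThrees L a b) ψ = replicate a 3 + replicate b L + ψ := by
  have hsum := (mainTwos_spec hL hab).2
  rw [decodeCounts, mainThrees_div_two, hsum, if_pos ⟨by omega, by omega⟩]
  congr
  omega

lemma decode_encodeMin {L m : ℕ} {ψ : Multiset ℕ} (hm : IsSharedPart L m)
    (hψ : ∀ x ∈ ψ, m ≤ x) : decode L (encodeMin m ψ) = m ::ₘ ψ := by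
  obtain ⟨hm4, hmL, hmL'⟩ := hm
  have hψ4 : ∀ x ∈ ψ, 4 ≤ x := fun x hx => hm4.trans (hψ x hx)
  have hlt : ∀ k < m, k ∉ ψ := fun k hk hkψ => (hψ k hkψ).not_gt hk
  unfold encodeMin
  split
  -- exceptional `m`: the membership tests of `decodeSmall` are decided by `hlt`
  all_goals try (rw [decode_twosThrees]; simp [decodeCounts, decodeSmall, hlt]; simpa using hψ4)
  next _ h4 h5 h6 h7 h9 =>
    simp only [imp_false] at h4 h5 h6 h7 h9
    have hd : (2 + m % 2) / 2 = 1 := by omega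
    rw [decode_twosThrees hψ4, decodeCounts, hd, mul_one, if_neg (by omega),
      if_pos (by omega)]
    congr 1
    omega

lemma decode_encodeThreeMin {L w : ℕ} {ψ : Multiset ℕ} (hL : 6 ≤ L) (hw : IsSharedPart L w)
    (hψ : ∀ x ∈ ψ, w ≤ x) : decode L (encodeThreeMin w ψ) = 3 ::ₘ w ::ₘ ψ := by
  obtain ⟨hw4, hwL, hwL'⟩ := hw
  have hψ4 : ∀ x ∈ ψ, 4 ≤ x := fun x hx => hw4.trans (hψ x hx)
  have hlt : ∀ k < w, k ∉ ψ := fun k hk hkψ => (hψ k hkψ).not_gt hk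
  unfold encodeThreeMin
  split
  all_goals try (rw [decode_twosThrees]; simp [decodeCounts, decodeSmall, hlt]; simpa using hψ4)
  next _ h4 h5 h6 h7 h8 h9 h10 h12 =>
    simp only [imp_false] at h4 h5 h6 h7 h8 h9 h10 h12
    have hd : (4 + (w + 1) % 2) / 2 = 2 := by omega
    rw [decode_twosThrees hψ4, decodeCounts, hd, if_neg (by omega), if_neg (by omega),
      if_pos (by omega)]
    congr 2
    omega

noncomputable def encodeParts (L a b : ℕ) (ψ : Multiset ℕ) : Multiset ℕ :=
  if 2 ≤ a ∨ b ≠ 0 then twosThrees (mainTwos L a b) (mainThrees L a b) ψ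
  else if a = 1 then encodeThreeMin (sInf {x | x ∈ ψ}) (ψ.erase (sInf {x | x ∈ ψ}))
  else encodeMin (sInf {x | x ∈ ψ}) (ψ.erase (sInf {x | x ∈ ψ}))

lemma sInf_mem_of_ne_zero {ψ : Multiset ℕ} (hψ : ψ ≠ 0) : sInf {x | x ∈ ψ} ∈ ψ :=
  Nat.sInf_mem (exists_mem_of_ne_zero hψ)

lemma sInf_le_of_mem_erase {ψ : Multiset ℕ} {x : ℕ}
    (hx : x ∈ ψ.erase (sInf {x | x ∈ ψ})) :
    sInf {x | x ∈ ψ} ≤ x :=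
  Nat.sInf_le (mem_of_mem_erase hx)

section encodeParts

variable {L a b : ℕ} {ψ : Multiset ℕ}

lemma sum_encodeParts (hL : 11 ≤ L) (hψ : ∀ x ∈ ψ, 4 ≤ x)
    (h : 2 ≤ a ∨ b ≠ 0 ∨ ψ ≠ 0) :
    (encodeParts L a b ψ).sum = 3 * a + L * b + ψ.sum := by
  unfold encodeParts
  split_ifs with hmain ha
  · exact (isHeadCode_main hL hmain).sum_eq ψ
  all_goals
    have hm := sInf_mem_of_ne_zero (show ψ ≠ 0 by tauto)
    have hsum : ψ.sum = _ := congrArg sum (cons_erase hm).symm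
    rw [sum_cons] at hsum
    obtain rfl : b = 0 := by omega
  · rw [(isHeadCode_encodeThreeMin (hψ _ hm)).sum_eq]
    omega
  · rw [(isHeadCode_encodeMin (hψ _ hm)).sum_eq]
    omega

lemma encodeParts_cstarParts (hL : 11 ≤ L) (hψ : ∀ x ∈ ψ, IsSharedPart L x)
    (h : 2 ≤ a ∨ b ≠ 0 ∨ ψ ≠ 0) : CStarParts L (encodeParts L a b ψ) := by
  unfold encodeParts
  split_ifs with hmain ha
  · exact (isHeadCode_main hL hmain).cstarParts (by omega) hψ
  all_goals
    have hm := sInf_mem_of_ne_zero (show ψ ≠ 0 by tauto)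
    have hψ' : ∀ x ∈ ψ.erase (sInf {x | x ∈ ψ}), IsSharedPart L x :=
      fun x hx => hψ x (mem_of_mem_erase hx)
  · exact (isHeadCode_encodeThreeMin (hψ _ hm).1).cstarParts (by omega) hψ'
  · exact (isHeadCode_encodeMin (hψ _ hm).1).cstarParts (by omega) hψ'

lemma decode_encodeParts (hL : 11 ≤ L) (hψ : ∀ x ∈ ψ, IsSharedPart L x)
    (h : 2 ≤ a ∨ b ≠ 0 ∨ ψ ≠ 0) :
    decode L (encodeParts L a b ψ) = replicate a 3 + replicate b L + ψ := by
  unfold encodeParts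
  split_ifs with hmain ha
  · rw [decode_twosThrees fun x hx => (hψ x hx).1, decodeCounts_main hL hmain]
  all_goals
    have hm := sInf_mem_of_ne_zero (show ψ ≠ 0 by tauto)
    obtain rfl : b = 0 := by omega
  · subst ha
    rw [decode_encodeThreeMin (by omega) (hψ _ hm) fun x => sInf_le_of_mem_erase, cons_erase hm]
    rfl
  · obtain rfl : a = 0 := by omega
    rw [decode_encodeMin (hψ _ hm) fun x => sInf_le_of_mem_erase, cons_erase hm]
    simp

end encodeParts

noncomputable def encode (L : ℕ) (s : Multiset ℕ) : Multiset ℕ :=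
  encodeParts L (s.count 3) (s.count L) (s.filter fun x => x ≠ 3 ∧ x ≠ L)

section encode

variable {L : ℕ} {s : Multiset ℕ}

lemma replicate_add_replicate_add_filter (hL : L ≠ 3) :
    replicate (s.count 3) 3 + replicate (s.count L) L + s.filter (fun x => x ≠ 3 ∧ x ≠ L) =
      s := by
  ext x
  simp only [count_add, count_replicate, count_filter]
  split_ifs <;> subst_vars <;> omega

lemma isSharedPart_of_mem_filter (hs : ∀ x ∈ s, 3 ≤ x ∧ x ≤ L + 2) :
    ∀ x ∈ s.filter (fun x => x ≠ 3 ∧ x ≠ L), IsSharedPart L x := by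
  intro x hx
  obtain ⟨hxs, hx3, hxL⟩ := mem_filter.1 hx
  exact ⟨by have := (hs x hxs).1; omega, (hs x hxs).2, hxL⟩

lemma nondegenerate_of_four_le_sum (hL : L ≠ 3) (hsum : 4 ≤ s.sum) :
    2 ≤ s.count 3 ∨ s.count L ≠ 0 ∨ s.filter (fun x => x ≠ 3 ∧ x ≠ L) ≠ 0 := by
  by_contra! h
  obtain ⟨h3, hL0, hψ⟩ := h
  have hs := replicate_add_replicate_add_filter (s := s) hL
  rw [hL0, hψ, replicate_zero, add_zero, add_zero] at hs
  rw [← hs, sum_replicate, smul_eq_mul] at hsum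
  omega

lemma decode_encode (hL : 11 ≤ L) (hs : ∀ x ∈ s, 3 ≤ x ∧ x ≤ L + 2)
    (hsum : 4 ≤ s.sum) :
    decode L (encode L s) = s := by
  rw [encode, decode_encodeParts hL (isSharedPart_of_mem_filter hs)
    (nondegenerate_of_four_le_sum (by omega) hsum), replicate_add_replicate_add_filter (by omega)]

lemma sum_encode (hL : 11 ≤ L) (hs : ∀ x ∈ s, 3 ≤ x ∧ x ≤ L + 2)
    (hsum : 4 ≤ s.sum) :
    (encode L s).sum = s.sum := by
  rw [encode, sum_encodeParts hL (fun x hx => (isSharedPart_of_mem_filter hs x hx).1)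
    (nondegenerate_of_four_le_sum (by omega) hsum)]
  conv_rhs => rw [← replicate_add_replicate_add_filter (s := s) (L := L) (by omega)]
  simp [sum_replicate, mul_comm]

lemma encode_cstarParts (hL : 11 ≤ L) (hs : ∀ x ∈ s, 3 ≤ x ∧ x ≤ L + 2)
    (hsum : 4 ≤ s.sum) :
    CStarParts L (encode L s) :=
  encodeParts_cstarParts hL (isSharedPart_of_mem_filter hs)
    (nondegenerate_of_four_le_sum (by omega) hsum)

end encode

def smallParts (M : ℕ) : Multiset ℕ := (4 + M % 4) ::ₘ replicate (M / 4 - 1) 4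

lemma sum_smallParts {M : ℕ} (hM : 4 ≤ M) : (smallParts M).sum = M := by
  simp only [smallParts, sum_cons, sum_replicate, smul_eq_mul]
  omega

lemma mem_smallParts {M x : ℕ} (hx : x ∈ smallParts M) : 4 ≤ x ∧ x ≤ 7 := by
  rcases mem_cons.1 hx with rfl | hx
  · omega
  · rw [eq_of_mem_replicate hx]; omega

lemma count_three_encodeMin_le_one {m : ℕ} {ψ : Multiset ℕ} (hm : 4 ≤ m ∧ m ≤ 7)
    (hψ : ∀ x ∈ ψ, 4 ≤ x) : (encodeMin m ψ).count 3 ≤ 1 := by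
  obtain ⟨hm4, hm7⟩ := hm
  interval_cases m <;> simp only [encodeMin] <;> rw [count_three_twosThrees] <;>
    simp_all

lemma encode_eq_encodeMin {L : ℕ} {t : Multiset ℕ} (ht : ∀ x ∈ t, 4 ≤ x ∧ x < L) :
    encode L t = encodeMin (sInf {x | x ∈ t}) (t.erase (sInf {x | x ∈ t})) := by
  have h3 : t.count 3 = 0 := count_eq_zero.2 fun h => by have := ht 3 h; omega
  have hL : t.count L = 0 := count_eq_zero.2 fun h => by have := ht L h; omega
  have hψ : t.filter (fun x => x ≠ 3 ∧ x ≠ L) = t :=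
    filter_eq_self.2 fun x hx => by have := ht x hx; omega
  rw [encode, h3, hL, hψ, encodeParts, if_neg (by omega), if_neg (by omega)]

lemma encode_ne_twosThrees_smallParts {L M : ℕ} {s : Multiset ℕ} (hL : 11 ≤ L)
    (hs : ∀ x ∈ s, 3 ≤ x ∧ x ≤ L + 2) (hsum : 4 ≤ s.sum) :
    encode L s ≠ twosThrees 2 2 (smallParts M) := by
  intro h
  have hsmall : ∀ x ∈ smallParts M, 4 ≤ x := fun x hx => (mem_smallParts hx).1
  have hs' : s = 10 ::ₘ smallParts M := by
    rw [← decode_encode hL hs hsum, h, decode_twosThrees hsmall, decodeCounts,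
      if_neg (by omega), if_pos (by omega)]
  subst hs'
  set t := 10 ::ₘ smallParts M
  have ht : ∀ x ∈ t, 4 ≤ x ∧ x ≤ 10 := by
    intro x hx
    rcases mem_cons.1 hx with rfl | hx
    · omega
    · have := mem_smallParts hx; omega
  have hm : sInf {x | x ∈ t} ∈ t := sInf_mem_of_ne_zero cons_ne_zero
  have hm7 : sInf {x | x ∈ t} ≤ 7 :=
    (Nat.sInf_le (mem_cons_of_mem (mem_cons_self _ _) : 4 + M % 4 ∈ t)).trans (by omega)
  rw [encode_eq_encodeMin fun x hx => ⟨(ht x hx).1, by have := ht x hx; omega⟩] at h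
  have hcount := congrArg (count 3) h
  rw [count_three_twosThrees hsmall] at hcount
  have := count_three_encodeMin_le_one (ψ := t.erase (sInf {x | x ∈ t})) ⟨(ht _ hm).1, hm7⟩
    fun x hx => (ht x (mem_of_mem_erase hx)).1
  omega

section Partition

variable {L N : ℕ}

noncomputable def encodePartition (hL : 11 ≤ L) (hN : 4 ≤ N)
    (p : {p : N.Partition // InD2 L p}) : {p : N.Partition // InCStar2 L p} :=
  have hsum : 4 ≤ p.1.parts.sum := hN.trans p.1.parts_sum.ge
  have hC := encode_cstarParts hL p.2.2 hsum
  ⟨⟨encode L p.1.parts, fun hi => by have := (hC.2.1 _ hi).1; omega,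
    (sum_encode hL p.2.2 hsum).trans p.1.parts_sum⟩, hC⟩

lemma encodePartition_injective (hL : 11 ≤ L) (hN : 4 ≤ N) :
    Function.Injective (encodePartition hL hN) := by
  intro p q hpq
  have hparts : encode L p.1.parts = encode L q.1.parts := congrArg (·.1.parts) hpq
  have h := congrArg (decode L) hparts
  rw [decode_encode hL p.2.2 (hN.trans p.1.parts_sum.ge),
    decode_encode hL q.2.2 (hN.trans q.1.parts_sum.ge)] at h
  exact Subtype.ext (Nat.Partition.ext h)

lemma exists_notMem_range_encodePartition (hL : 11 ≤ L) (hN : 14 ≤ N) :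
    ∃ q, q ∉ Set.range (encodePartition hL (by omega : 4 ≤ N)) := by
  have hsmall : ∀ x ∈ smallParts (N - 10), IsSharedPart L x := fun x hx => by
    have := mem_smallParts hx
    exact ⟨this.1, by omega, by omega⟩
  have hC := twosThrees_cstarParts (d := 2) (by omega) (by norm_num : 2 ≠ 0) hsmall
  refine ⟨⟨⟨twosThrees 2 2 (smallParts (N - 10)), fun hi => by have := (hC.2.1 _ hi).1; omega,
    by rw [sum_twosThrees, sum_smallParts (by omega)]; omega⟩, hC⟩, ?_⟩
  rintro ⟨p, hp⟩
  exact encode_ne_twosThrees_smallParts hL p.2.2 ((by omega : 4 ≤ N).trans p.1.parts_sum.ge)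
    (congrArg (·.1.parts) hp)

end Partition

theorem stmt_17 (L : ℕ) (hL : 11 ≤ L) :
    (∀ N : ℕ, 4 ≤ N →
      Nat.card {p : N.Partition // InCStar2 L p} ≥ Nat.card {p : N.Partition // InD2 L p}) ∧
    (∀ N : ℕ, 14 ≤ N →
      Nat.card {p : N.Partition // InCStar2 L p} > Nat.card {p : N.Partition // InD2 L p}) := by
  refine ⟨fun N hN => Nat.card_le_card_of_injective _ (encodePartition_injective hL hN),
    fun N hN => ?_⟩
  obtain ⟨q, hq⟩ := exists_notMem_range_encodePartition hL hN
  classical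
  simp only [Nat.card_eq_fintype_card]
  exact Fintype.card_lt_of_injective_of_notMem _ (encodePartition_injective hL _) hq
end

section
/- For every integer N > 43, the number of partitions of N lying in C*_{3,2} is at least the number of partitions of N lying in D_{3,2}. -/
/-!
Record a partition with parts in `{3, 4, 5}` by its multiplicities `(a, b, c)`, and one with parts
in `{2, 4, 5}` by `(x, y, z)`. An injection from the former to the latter with `x ≥ 1` trades the
3's for 2's: `3 + 3 = 2 + 2 + 2` on pairs of 3's and `3 + 3 + 3 = 2 + 2 + 5` for an odd number
`a ≥ 3`. When `a ≤ 1`, a few 4's and 5's are regrouped instead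
(`3 + 5 = 4·2`, `3 + 4 = 2 + 5`, `4 + 5 + 5 = 7·2`, `4·5 = 5·4 = 10·2`, `9·4 + 5 = 13·2 + 3·5`).
The number of 2's separates the branches: it is `≡ 0 (mod 3)` for even `a`, `≡ 2` for odd `a ≥ 3`,
and one of `1, 4, 7, 10, 13` when `a ≤ 1`.
-/

open Multiset

def weight (u v w : ℕ) (t : ℕ × ℕ × ℕ) : ℕ := u * t.1 + v * t.2.1 + w * t.2.2

namespace Multiset

variable {α : Type*} [DecidableEq α] {u v w : α}

def countTriple (u v w : α) (s : Multiset α) : ℕ × ℕ × ℕ := (s.count u, s.count v, s.count w)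

def replicateTriple (u v w : α) (t : ℕ × ℕ × ℕ) : Multiset α :=
  replicate t.1 u + replicate t.2.1 v + replicate t.2.2 w

lemma countTriple_replicateTriple (huv : u ≠ v) (huw : u ≠ w) (hvw : v ≠ w) (t : ℕ × ℕ × ℕ) :
    countTriple u v w (replicateTriple u v w t) = t := by
  simp [countTriple, replicateTriple, count_replicate, huv, huw, hvw, huv.symm, huw.symm,
    hvw.symm]

lemma replicateTriple_countTriple (huv : u ≠ v) (huw : u ≠ w) (hvw : v ≠ w) {s : Multiset α}
    (hs : ∀ x ∈ s, x = u ∨ x = v ∨ x = w) :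
    replicateTriple u v w (countTriple u v w s) = s := by
  ext x
  simp only [replicateTriple, countTriple, count_add, count_replicate]
  by_cases hx : x = u ∨ x = v ∨ x = w
  · rcases hx with rfl | rfl | rfl <;> simp [huv, huw, hvw, huv.symm, huw.symm, hvw.symm]
  · rw [count_eq_zero.2 fun hxs => hx (hs x hxs)]
    grind

lemma sum_replicateTriple (u v w : ℕ) (t : ℕ × ℕ × ℕ) :
    (replicateTriple u v w t).sum = weight u v w t := by
  simp [replicateTriple, weight, sum_replicate, mul_comm]

end Multiset

def trade : ℕ × ℕ × ℕ → ℕ × ℕ × ℕ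
  | (0, 0, c) => (10, 0, c - 4)
  | (0, b, 0) => (10, b - 5, 0)
  | (0, b, 1) => (13, b - 9, 3)
  | (0, b, c) => (7, b - 1, c - 2)
  | (1, b, 0) => (1, b - 1, 1)
  | (1, b, c) => (4, b, c - 1)
  | (a, b, c) => if Even a then (3 * a / 2, b, c) else ((3 * a - 5) / 2, b, c + 1)

-- `37` is sharp: the branch `(0, b, 1)` needs `b ≥ 9`, and `(0, 8, 1)` has weight `37`.
lemma weight_trade {t : ℕ × ℕ × ℕ} (ht : 37 < weight 3 4 5 t) :
    weight 2 4 5 (trade t) = weight 3 4 5 t ∧ 0 < (trade t).1 := by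
  unfold weight at *
  fun_cases trade t <;> grind

-- The two branches producing ten 2's meet only in `trade (0, 0, 4) = trade (0, 5, 0)`,
-- of weight `20`.
lemma trade_injOn : Set.InjOn trade {t | 37 < weight 3 4 5 t} := by
  intro t (ht : 37 < weight 3 4 5 t) s (hs : 37 < weight 3 4 5 s)
  unfold weight at ht hs
  fun_cases trade t <;> fun_cases trade s <;>
    simp only [Prod.mk.injEq, Nat.even_iff, true_and, and_true, imp_false] at * <;> omega

namespace Nat.Partition

variable {N : ℕ}

lemma replicateTriple_countTriple_of_inD2 {p : N.Partition} (hp : InD2 3 p) :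
    replicateTriple 3 4 5 (countTriple 3 4 5 p.parts) = p.parts :=
  replicateTriple_countTriple (by decide) (by decide) (by decide) fun x hx => by
    have := hp.2 x hx
    omega

lemma weight_countTriple_of_inD2 {p : N.Partition} (hp : InD2 3 p) :
    weight 3 4 5 (countTriple 3 4 5 p.parts) = N := by
  rw [← sum_replicateTriple, replicateTriple_countTriple_of_inD2 hp, p.parts_sum]

lemma countTriple_injOn_inD2 :
    Set.InjOn (fun p : N.Partition => countTriple 3 4 5 p.parts) {p | InD2 3 p} := by
  intro p (hp : InD2 3 p) q (hq : InD2 3 q) hpq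
  ext1
  rw [← replicateTriple_countTriple_of_inD2 hp, ← replicateTriple_countTriple_of_inD2 hq]
  exact congrArg _ hpq

def ofTriple245 (t : ℕ × ℕ × ℕ) (ht : weight 2 4 5 t = N) : N.Partition :=
  ofSums N (replicateTriple 2 4 5 t) ((sum_replicateTriple 2 4 5 t).trans ht)

lemma countTriple_ofTriple245 (t : ℕ × ℕ × ℕ) (ht : weight 2 4 5 t = N) :
    countTriple 2 4 5 (ofTriple245 t ht).parts = t := by
  simp only [ofTriple245, countTriple, count_ofSums_of_ne_zero _ (by decide : (2 : ℕ) ≠ 0),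
    count_ofSums_of_ne_zero _ (by decide : (4 : ℕ) ≠ 0),
    count_ofSums_of_ne_zero _ (by decide : (5 : ℕ) ≠ 0)]
  exact countTriple_replicateTriple (by decide) (by decide) (by decide) t

lemma inCStar2_ofTriple245 {t : ℕ × ℕ × ℕ} (ht : weight 2 4 5 t = N) (h2 : 0 < t.1) :
    InCStar2 3 (ofTriple245 t ht) := by
  simp only [InCStar2, ofTriple245, ofSums, mem_filter, replicateTriple, mem_add, mem_replicate,
    and_true]
  exact ⟨by omega, fun x hx => by omega, by omega⟩

lemma lt_weight_countTriple_of_inD2 {k : ℕ} (hN : k < N) (p : {p : N.Partition // InD2 3 p}) :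
    k < weight 3 4 5 (countTriple 3 4 5 p.1.parts) := by
  rwa [weight_countTriple_of_inD2 p.2]

def tradeD2 (hN : 37 < N) (p : {p : N.Partition // InD2 3 p}) :
    {p : N.Partition // InCStar2 3 p} :=
  have h := weight_trade (lt_weight_countTriple_of_inD2 hN p)
  ⟨ofTriple245 _ (h.1.trans (weight_countTriple_of_inD2 p.2)), inCStar2_ofTriple245 _ h.2⟩

lemma tradeD2_injective (hN : 37 < N) : Function.Injective (tradeD2 hN) := by
  intro p q hpq
  have h := congrArg (fun r : {p : N.Partition // InCStar2 3 p} => countTriple 2 4 5 r.1.parts) hpq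
  simp only [tradeD2, countTriple_ofTriple245] at h
  exact Subtype.ext <| countTriple_injOn_inD2 p.2 q.2 <|
    trade_injOn (lt_weight_countTriple_of_inD2 hN p) (lt_weight_countTriple_of_inD2 hN q) h

end Nat.Partition

theorem stmt_19 (N : ℕ) (hN : 43 < N) :
    Nat.card {p : N.Partition // InCStar2 3 p} ≥ Nat.card {p : N.Partition // InD2 3 p} :=
  Nat.card_le_card_of_injective _ (Nat.Partition.tradeD2_injective (by omega))
end
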